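/- arXiv:1011.4154 — 7 statements merged into one kernel-verified Lean document; each statement's English description precedes it below -/
import Mathlib

section
/- Let x : E⁰ → ℤ be finitely supported with every vertex in its support a finite emitter, and suppose x satisfies the kernel condition. Then S↑(x) and S↓(x) are finite sets and have the same number of elements. -/
/-- The index set `S↑(x)`. -/
def SUp {V E : Type*} (s : E → V) (x : V → ℤ) : Set ((E ⊕ V) × ℤ) :=
  {q | match q.1 with
       | Sum.inl e => 1 ≤ q.2 ∧ q.2 ≤ -x (s e)
       | Sum.inr v => 1 ≤ q.2 ∧ q.2 ≤ x v}

/-- The index set `S↓(x)`. -/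
def SDn {V E : Type*} (s : E → V) (x : V → ℤ) : Set ((E ⊕ V) × ℤ) :=
  {q | match q.1 with
       | Sum.inl e => 1 ≤ q.2 ∧ q.2 ≤ x (s e)
       | Sum.inr v => 1 ≤ q.2 ∧ q.2 ≤ -x v}

/-!
`S↓(x)` is the set of lattice points `(i, k)` with `1 ≤ k ≤ w i`, where `w` is `x ∘ s` on edges and
`-x` on vertices, and `S↑(x)` is the same set for `-w`. Both are finite disjoint unions of integer
intervals, so `|S↓| - |S↑| = ∑ (w⁺ - (-w)⁺) = ∑ w = ∑_e x_{s(e)} - ∑_v x_v`, and summing the kernel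
condition over all vertices (regrouping the edges by their range) shows that this difference is `0`.
-/

open Finset

theorem finsum_eq_finsum_fiberwise {E V M : Type*} [AddCommMonoid M] {f : E → M}
    (hf : (Function.support f).Finite) (g : E → V) :
    ∑ᶠ e, f e = ∑ᶠ v, ∑ᶠ e ∈ {e | g e = v}, f e := by
  classical
  have hfiber : (Function.support fun v => ∑ᶠ e ∈ {e | g e = v}, f e) ⊆ ↑(hf.toFinset.image g) := by
    intro v hv
    obtain ⟨e, rfl, he⟩ := exists_ne_zero_of_finsum_mem_ne_zero hv
    exact mem_image_of_mem g (hf.mem_toFinset.mpr he)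
  rw [finsum_eq_sum_of_support_subset f hf.coe_toFinset.ge,
    finsum_eq_sum_of_support_subset _ hfiber,
    ← sum_fiberwise_of_maps_to fun e he => mem_image_of_mem g he]
  refine sum_congr rfl fun v _ => (finsum_mem_eq_sum_of_inter_support_eq _ ?_).symm
  ext e
  simp [and_comm]

def latticeBelow {ι : Type*} (w : ι → ℤ) : Set (ι × ℤ) :=
  {q | 1 ≤ q.2 ∧ q.2 ≤ w q.1}

section latticeBelow

variable {ι : Type*} {w : ι → ℤ} {T : Finset ι}

theorem latticeBelow_eq_biUnion [DecidableEq ι] (hT : ∀ i, 0 < w i → i ∈ T) :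
    latticeBelow w = ↑(T.biUnion fun i => {i} ×ˢ Icc 1 (w i)) := by
  ext ⟨i, k⟩
  simp only [latticeBelow, Set.mem_ofPred_eq, coe_biUnion, Set.mem_iUnion, mem_coe, mem_product,
    mem_singleton, mem_Icc, exists_prop]
  constructor
  · intro hk
    exact ⟨i, hT i (by omega), rfl, hk⟩
  · rintro ⟨_, _, rfl, hk⟩
    exact hk

theorem latticeBelow_finite (hT : ∀ i, 0 < w i → i ∈ T) : (latticeBelow w).Finite := by
  classical
  rw [latticeBelow_eq_biUnion hT]
  exact finite_toSet _

theorem ncard_latticeBelow (hT : ∀ i, 0 < w i → i ∈ T) :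
    (latticeBelow w).ncard = ∑ i ∈ T, (w i).toNat := by
  classical
  rw [latticeBelow_eq_biUnion hT, Set.ncard_coe_finset, card_biUnion]
  · simp
  · intro i _ j _ hij
    exact disjoint_product.mpr (.inl (disjoint_singleton.mpr hij))

end latticeBelow

theorem sDn_eq_latticeBelow {V E : Type*} (s : E → V) (x : V → ℤ) :
    SDn s x = latticeBelow (Sum.elim (fun e => x (s e)) fun v => -x v) := by
  ext ⟨e | v, k⟩ <;> rfl

theorem sUp_eq_latticeBelow {V E : Type*} (s : E → V) (x : V → ℤ) :
    SUp s x = latticeBelow (-Sum.elim (fun e => x (s e)) fun v => -x v) := by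
  ext ⟨e | v, k⟩ <;> simp [SUp, latticeBelow]

theorem stmt4_general {V E : Type*} (r s : E → V)
    (x : V → ℤ) (hsupp : {v | x v ≠ 0}.Finite)
    (hemit : ∀ v, x v ≠ 0 → {e | s e = v}.Finite)
    (hker : ∀ v, ∑ᶠ e ∈ {e | r e = v}, x (s e) = x v) :
    (SUp s x).Finite ∧ (SDn s x).Finite ∧ (SUp s x).ncard = (SDn s x).ncard := by
  classical
  have hF : {e | x (s e) ≠ 0}.Finite :=
    (hsupp.biUnion hemit).subset fun e he => Set.mem_biUnion he rfl
  have hbalance : ∑ e ∈ hF.toFinset, x (s e) = ∑ v ∈ hsupp.toFinset, x v :=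
    calc ∑ e ∈ hF.toFinset, x (s e) = ∑ᶠ e, x (s e) :=
          (finsum_eq_sum_of_support_subset _ hF.coe_toFinset.ge).symm
      _ = ∑ᶠ v, ∑ᶠ e ∈ {e | r e = v}, x (s e) := finsum_eq_finsum_fiberwise hF r
      _ = ∑ᶠ v, x v := finsum_congr hker
      _ = ∑ v ∈ hsupp.toFinset, x v := finsum_eq_sum_of_support_subset _ hsupp.coe_toFinset.ge
  set w : E ⊕ V → ℤ := Sum.elim (fun e => x (s e)) fun v => -x v
  set T := hF.toFinset.disjSum hsupp.toFinset
  have hT : ∀ i, w i ≠ 0 → i ∈ T := by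
    rintro (e | v) hi <;> simpa [T, w] using hi
  have hTw : ∀ i, 0 < w i → i ∈ T := fun i hi => hT i hi.ne'
  have hTnegw : ∀ i, 0 < (-w) i → i ∈ T := fun i hi => hT i (by simpa using hi.ne')
  have hsum : ∑ i ∈ T, w i = 0 := by
    simp [T, w, sum_disjSum, hbalance]
  rw [sUp_eq_latticeBelow, sDn_eq_latticeBelow]
  refine ⟨latticeBelow_finite hTnegw, latticeBelow_finite hTw, ?_⟩
  rw [ncard_latticeBelow hTnegw, ncard_latticeBelow hTw]
  have hsplit : ((∑ i ∈ T, (w i).toNat : ℕ) : ℤ) - (∑ i ∈ T, (-w i).toNat : ℕ) = ∑ i ∈ T, w i := by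
    push_cast
    rw [← sum_sub_distrib]
    exact sum_congr rfl fun i _ => Int.toNat_sub_toNat_neg (w i)
  simp only [Pi.neg_apply]
  omega

theorem stmt4 {V E : Type*} [Countable V] [Countable E] (r s : E → V)
    (x : V → ℤ) (hsupp : {v | x v ≠ 0}.Finite)
    (hemit : ∀ v, x v ≠ 0 → {e | s e = v}.Finite)
    (hker : ∀ v, ∑ᶠ e ∈ {e | r e = v}, x (s e) = x v) :
    (SUp s x).Finite ∧ (SDn s x).Finite ∧ (SUp s x).ncard = (SDn s x).ncard :=
  stmt4_general r s x hsupp hemit hker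
end

section
/- With notation as in the context, VV* = ∑_{w ∈ E⁰, 1≤i≤x_w, e ∈ E¹ with s(e)=w} (s_e s_e*)·E_{m↑(w,i),m↑(w,i)} + ∑_{w ∈ E⁰, 1≤i≤−x_w, e ∈ E¹ with s(e)=w} p_{r(e)}·E_{m↑(e,i),m↑(e,i)}. -/
/-- The range map extended to `E¹ ⊕ E⁰` via the convention `r v = v` for vertices. -/
def rext {V E : Type*} (r : E → V) : E ⊕ V → V := Sum.elim r id

/-- The element `V` of `M_h(A)` associated to a family `{p_v, s_e}` and `x`:
`V = ∑_{w, 1≤i≤x_w, s(e)=w} s_e·E_{m↑(w,i),m↓(e,i)} + ∑_{w, 1≤i≤-x_w, s(e)=w} s_e*·E_{m↑(e,i),m↓(w,i)}`,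
where the first sum is indexed by the pairs `(e,i) ∈ S↓(x)` with `e ∈ E¹` (and `w = s(e)`),
and the second by the pairs `(e,i) ∈ S↑(x)` with `e ∈ E¹` (and `w = s(e)`). -/
noncomputable def Vmat {V E A : Type*} [AddCommMonoid A] [Star A]
    (s : E → V) (x : V → ℤ) (S : E → A) {h : ℕ}
    [Fintype (SUp s x)] [Fintype (SDn s x)]
    (mup : SUp s x ≃ Fin h) (mdn : SDn s x ≃ Fin h) : Matrix (Fin h) (Fin h) A :=
  (∑ q : SDn s x, match q with
    | ⟨(Sum.inl e, i), hq⟩ =>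
        Matrix.single (mup ⟨(Sum.inr (s e), i), hq⟩) (mdn ⟨(Sum.inl e, i), hq⟩) (S e)
    | ⟨(Sum.inr _, _), _⟩ => 0)
  + (∑ q : SUp s x, match q with
    | ⟨(Sum.inl e, i), hq⟩ =>
        Matrix.single (mup ⟨(Sum.inl e, i), hq⟩) (mdn ⟨(Sum.inr (s e), i), hq⟩) (star (S e))
    | ⟨(Sum.inr _, _), _⟩ => 0)

/-- The element `P` of `M_h(A)`:
`P = ∑_{w, 1≤i≤x_w} p_w·E_{m↑(w,i),m↑(w,i)} + ∑_{w, 1≤i≤-x_w, s(e)=w} p_{r(e)}·E_{m↑(e,i),m↑(e,i)}`,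
written as a single sum over `S↑(x)` using the convention `r v = v`. -/
noncomputable def Pmat {V E A : Type*} [AddCommMonoid A]
    (r s : E → V) (x : V → ℤ) (p : V → A) {h : ℕ}
    [Fintype (SUp s x)]
    (mup : SUp s x ≃ Fin h) : Matrix (Fin h) (Fin h) A :=
  ∑ q : SUp s x, Matrix.single (mup q) (mup q) (p (rext r q.1.1))

/-!
Expand `V` as a sum of matrix units `T k`, one for each `k ∈ S↓(x) ⊔ S↑(x)` (zero at vertex
indices). `T k * (T l)*` vanishes unless `T k` and `T l` sit in the same column; since `m↓` is
injective, for `k ≠ l` this happens only for the units `s_e*` and `s_f*` with `e ≠ f` in the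
column `m↓(w,i)`, `w = s e = s f`, and then the entry `s_e* s_f` is zero. Hence
`V V* = ∑ T k * (T k)*`: the `S↑(x)` units give `s_e* s_e = p_{r(e)}` at `m↑(e,i)`, and the
`S↓(x)` units give `s_e s_e*` at `m↑(s e,i)`, which grouped by the source `w` are the vertex
terms; these groups are finite because `e ↦ (e,1)` embeds `s⁻¹(w)` into the finite `S↓(x)`.
-/

open Matrix

theorem sum_mul_star_sum_of_pairwise {ι R : Type*} [Fintype ι] [NonUnitalNonAssocSemiring R]
    [StarAddMonoid R] (f : ι → R) (hf : Pairwise fun i j => f i * star (f j) = 0) :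
    (∑ i, f i) * star (∑ i, f i) = ∑ i, f i * star (f i) := by
  rw [star_sum, Finset.sum_mul_sum]
  exact Finset.sum_congr rfl fun i _ =>
    Finset.sum_eq_single i (fun j _ hji => hf hji.symm) (by simp)

namespace Matrix

variable {n α : Type*} [Fintype n] [DecidableEq n]
  [NonUnitalNonAssocSemiring α] [StarAddMonoid α]

theorem single_mul_star_single_same (i j k : n) (a b : α) :
    single i j a * star (single k j b) = single i k (a * star b) := by
  rw [star_eq_conjTranspose, conjTranspose_single, single_mul_single_same]

theorem single_mul_star_single_of_ne (i : n) {j j' : n} (k : n) (h : j ≠ j') (a b : α) :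
    single i j a * star (single k j' b) = 0 := by
  rw [star_eq_conjTranspose, conjTranspose_single, single_mul_single_of_ne (h := h)]

end Matrix

section

variable {V E : Type*} (s : E → V) (x : V → ℤ)

theorem finite_setOf_source_eq [Finite (SDn s x)] {w : V} (hw : 1 ≤ x w) :
    {e | s e = w}.Finite := by
  refine Set.finite_coe_iff.mp (Finite.of_injective
    (fun e : {e | s e = w} => (⟨(.inl e.1, 1), le_rfl, by rw [e.2]; exact hw⟩ : SDn s x)) ?_)
  intro e f hef
  exact Subtype.ext (Sum.inl_injective (congrArg (fun q : SDn s x => q.1.1) hef))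

theorem sum_SDn_eq_sum_SUp {M : Type*} [AddCommMonoid M] [Fintype (SUp s x)] [Fintype (SDn s x)]
    (c : SDn s x → M) (d : SUp s x → M) (F : SUp s x → E → M)
    (hc_edge : ∀ e i hq, c ⟨(.inl e, i), hq⟩ = F ⟨(.inr (s e), i), hq⟩ e)
    (hc_vertex : ∀ v i hq, c ⟨(.inr v, i), hq⟩ = 0)
    (hd_edge : ∀ e i hq, d ⟨(.inl e, i), hq⟩ = 0)
    (hd_vertex : ∀ w i hq, d ⟨(.inr w, i), hq⟩ = ∑ᶠ e ∈ {e | s e = w}, F ⟨(.inr w, i), hq⟩ e) :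
    ∑ q, c q = ∑ q, d q := by
  classical
  let π : SDn s x → Option (SUp s x)
    | ⟨(.inl e, i), hq⟩ => some ⟨(.inr (s e), i), hq⟩
    | ⟨(.inr _, _), _⟩ => none
  rw [← Fintype.sum_fiberwise π, Fintype.sum_option, Finset.sum_eq_zero, zero_add]
  · refine Fintype.sum_congr _ _ fun q => ?_
    rcases q with ⟨⟨e | w, i⟩, hq⟩
    · rw [hd_edge]
      refine Finset.sum_eq_zero ?_
      rintro ⟨⟨⟨f | v, j⟩, hq'⟩, hπ⟩ -
      · simp only [π, Option.some.injEq] at hπ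
        cases congrArg (fun q : SUp s x => q.1.1) hπ
      · cases hπ
    · have mem : ∀ e, s e = w → (.inl e, i) ∈ SDn s x := by rintro e rfl; exact hq
      have mem_fiber : ∀ e (he : s e = w),
          π ⟨(.inl e, i), mem e he⟩ = some ⟨(.inr w, i), hq⟩ := by rintro e rfl; rfl
      rw [hd_vertex, ← finsum_eq_sum_of_fintype, ← finsum_set_coe_eq_finsum_mem]
      refine (finsum_eq_of_bijective (fun e : {e | s e = w} =>
          (⟨⟨(.inl e.1, i), mem e.1 e.2⟩, mem_fiber e.1 e.2⟩ : {q' // π q' = _}))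
          ⟨fun e f hef => ?_, ?_⟩ ?_).symm
      · exact Subtype.ext (Sum.inl_injective (congrArg (fun q => q.1.1.1) hef))
      · rintro ⟨⟨⟨f | v, j⟩, hq'⟩, hπ⟩
        · simp only [π, Option.some.injEq] at hπ
          obtain ⟨rfl, rfl⟩ := hπ
          exact ⟨⟨f, rfl⟩, rfl⟩
        · cases hπ
      · rintro ⟨e, rfl⟩
        exact (hc_edge e i _).symm
  · rintro ⟨⟨⟨e | v, i⟩, hq⟩, hπ⟩ -
    · cases hπ
    · exact hc_vertex v i hq

end

section

variable {V E A : Type*} [NonUnitalNonAssocSemiring A] [StarAddMonoid A]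
  (s : E → V) (x : V → ℤ) (S : E → A) {h : ℕ}
  (mup : SUp s x ≃ Fin h) (mdn : SDn s x ≃ Fin h)

noncomputable def vmatTerm : SDn s x ⊕ SUp s x → Matrix (Fin h) (Fin h) A
  | .inl ⟨(.inl e, i), hq⟩ => single (mup ⟨(.inr (s e), i), hq⟩) (mdn ⟨(.inl e, i), hq⟩) (S e)
  | .inr ⟨(.inl e, i), hq⟩ =>
      single (mup ⟨(.inl e, i), hq⟩) (mdn ⟨(.inr (s e), i), hq⟩) (star (S e))
  | _ => 0

theorem vmat_eq_sum_vmatTerm [Fintype (SUp s x)] [Fintype (SDn s x)] :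
    Vmat s x S mup mdn = ∑ k, vmatTerm s x S mup mdn k := by
  rw [Vmat, Fintype.sum_sum_type]
  congr 1 <;> refine Finset.sum_congr rfl ?_ <;> rintro ⟨⟨e | v, i⟩, hq⟩ - <;> rfl

theorem vmatTerm_mul_star_pairwise (hS_orth : ∀ e f, e ≠ f → star (S e) * S f = 0) :
    Pairwise fun k l => vmatTerm s x S mup mdn k * star (vmatTerm s x S mup mdn l) = 0 := by
  rintro (⟨⟨e | v, i⟩, hk⟩ | ⟨⟨e | v, i⟩, hk⟩) (⟨⟨f | w, j⟩, hl⟩ | ⟨⟨f | w, j⟩, hl⟩) hkl <;>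
    simp only [vmatTerm, zero_mul, mul_zero, star_zero]
  · exact single_mul_star_single_of_ne _ _
      (fun hc => hkl (congrArg Sum.inl (mdn.injective hc))) _ _
  · exact single_mul_star_single_of_ne _ _
      (fun hc => by cases congrArg (fun q : SDn s x => q.1.1) (mdn.injective hc)) _ _
  · exact single_mul_star_single_of_ne _ _
      (fun hc => by cases congrArg (fun q : SDn s x => q.1.1) (mdn.injective hc)) _ _
  · by_cases hc : mdn ⟨(.inr (s e), i), hk⟩ = mdn ⟨(.inr (s f), j), hl⟩
    · have hij : i = j := congrArg (fun q : SDn s x => q.1.2) (mdn.injective hc)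
      have hef : e ≠ f := by rintro rfl; subst hij; exact hkl rfl
      rw [hc, single_mul_star_single_same, star_star, hS_orth e f hef, single_zero]
    · exact single_mul_star_single_of_ne _ _ hc _ _

end

theorem stmt7_general {V E A : Type*} [NonUnitalCStarAlgebra A]
    (r s : E → V) (p : V → A) (S : E → A)
    (hCK1 : ∀ e, star (S e) * S e = p (r e))
    (hS_orth : ∀ e f, e ≠ f → star (S e) * S f = 0)
    (x : V → ℤ)
    {h : ℕ} [Fintype (SUp s x)] [Fintype (SDn s x)]
    (mup : SUp s x ≃ Fin h) (mdn : SDn s x ≃ Fin h) :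
    Vmat s x S mup mdn * star (Vmat s x S mup mdn) =
      ∑ q : SUp s x, Matrix.single (mup q) (mup q)
        (match q.1.1 with
         | Sum.inl e => p (r e)
         | Sum.inr w => ∑ᶠ e ∈ {e | s e = w}, S e * star (S e)) := by
  rw [vmat_eq_sum_vmatTerm, sum_mul_star_sum_of_pairwise _
    (vmatTerm_mul_star_pairwise s x S mup mdn hS_orth), Fintype.sum_sum_type,
    ← eq_sub_iff_add_eq, ← Finset.sum_sub_distrib]
  -- what is left of the right-hand side after removing the `S↑(x)` terms is the vertex part
  refine sum_SDn_eq_sum_SUp s x _ _ (fun q e => single (mup q) (mup q) (S e * star (S e)))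
    (fun _ _ _ => single_mul_star_single_same _ _ _ _ _) (fun _ _ _ => by simp [vmatTerm])
    (fun _ _ _ => by simp [vmatTerm, single_mul_star_single_same, hCK1]) fun _ _ hq => ?_
  simp only [vmatTerm, zero_mul, sub_zero]
  exact AddMonoidHom.map_finsum_mem _ (singleAddMonoidHom (α := A) _ _)
    (finite_setOf_source_eq s x (hq.1.trans hq.2))

theorem stmt7 {V E A : Type*} [Countable V] [Countable E] [NonUnitalCStarAlgebra A]
    (r s : E → V) (p : V → A) (S : E → A)
    (hp_star : ∀ v, star (p v) = p v)
    (hp_idem : ∀ v, p v * p v = p v)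
    (hp_orth : ∀ v w, v ≠ w → p v * p w = 0)
    (hCK1 : ∀ e, star (S e) * S e = p (r e))
    (hS_orth : ∀ e f, e ≠ f → star (S e) * S f = 0)
    (hCK3 : ∀ e, p (s e) * S e = S e)
    (x : V → ℤ) (hsupp : {v | x v ≠ 0}.Finite)
    (hemit : ∀ v, x v ≠ 0 → {e | s e = v}.Finite)
    (hker : ∀ v, ∑ᶠ e ∈ {e | r e = v}, x (s e) = x v)
    {h : ℕ} [Fintype (SUp s x)] [Fintype (SDn s x)]
    (mup : SUp s x ≃ Fin h) (mdn : SDn s x ≃ Fin h)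
    (hcomp : ∀ (q : SUp s x) (q' : SDn s x), mup q = mdn q' → rext r q.1.1 = rext r q'.1.1) :
    Vmat s x S mup mdn * star (Vmat s x S mup mdn) =
      ∑ q : SUp s x, Matrix.single (mup q) (mup q)
        (match q.1.1 with
         | Sum.inl e => p (r e)
         | Sum.inr w => ∑ᶠ e ∈ {e | s e = w}, S e * star (S e)) :=
  stmt7_general r s p S hCK1 hS_orth x mup mdn
end

section
/- With notation as in the context, V*V = ∑_{w ∈ E⁰, 1≤i≤−x_w, e ∈ E¹ with s(e)=w} (s_e s_e*)·E_{m↓(w,i),m↓(w,i)} + ∑_{w ∈ E⁰, 1≤i≤x_w, e ∈ E¹ with s(e)=w} p_{r(e)}·E_{m↓(e,i),m↓(e,i)}. -/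
/-!
Write `V` as a sum of matrix units `c_k · E_{row k, col k}`, the terms being
`s_e · E_{m↑(s e,i), m↓(e,i)}` and `s_e* · E_{m↑(e,i), m↓(s e,i)}`. In `V*V` a product of two
terms survives only if they share a row; distinct terms do so only as `s_e`, `s_f` with
`s e = s f`, `e ≠ f`, where `s_e* s_f = 0`. The diagonal products give `p_{r e}` at `m↓(e,i)` and
`s_e s_e*` at `m↓(s e,i)`; the edges leaving `w` form a fibre of the finite set `S↑(x)`, so
collecting the latter is a genuine finite sum.
-/

open scoped Matrix

namespace Matrix

variable {K ι n α : Type*} [Fintype K] [DecidableEq n]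

theorem conjTranspose_sum_single_mul_self [Fintype n] [NonUnitalNonAssocSemiring α]
    [StarAddMonoid α]
    (row col : K → n) (c : K → α)
    (h : ∀ k l, k ≠ l → row k = row l → star (c k) * c l = 0) :
    (∑ k, single (row k) (col k) (c k))ᴴ * ∑ k, single (row k) (col k) (c k) =
      ∑ k, single (col k) (col k) (star (c k) * c k) := by
  rw [conjTranspose_sum, Finset.sum_mul_sum]
  refine Finset.sum_congr rfl fun k _ => ?_
  rw [Finset.sum_eq_single k]
  · rw [conjTranspose_single, single_mul_single_same]
  · intro l _ hlk
    rw [conjTranspose_single]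
    by_cases hr : row k = row l
    · rw [hr, single_mul_single_same, h k l (Ne.symm hlk) hr, single_zero]
    · exact single_mul_single_of_ne _ _ _ _ hr _
  · simp

theorem sum_single_diag_fiberwise [Fintype ι] [DecidableEq ι] [AddCommMonoid α]
    (g : K → ι) (d : ι → n) (f : K → α) :
    ∑ k, single (d (g k)) (d (g k)) (f k) =
      ∑ j, single (d j) (d j) (∑ k : {k // g k = j}, f k) := by
  rw [← Fintype.sum_fiberwise g]
  refine Finset.sum_congr rfl fun j _ => ?_
  rw [← singleAddMonoidHom_apply, map_sum]
  exact Finset.sum_congr rfl fun k _ => by rw [k.2, singleAddMonoidHom_apply]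

end Matrix

section EdgeLevels

variable {V E : Type*} (s : E → V)

-- `(e, i) ↦ (inl e, i)` embeds `edgeLevels s x` in `S↓(x)` and `(e, i) ↦ (inr (s e), i)` maps it
-- to `S↑(x)`; `edgeLevels s (-x)` plays the same role with `S↑` and `S↓` exchanged.
def edgeLevels (y : V → ℤ) : Set (E × ℤ) := {k | 1 ≤ k.2 ∧ k.2 ≤ y (s k.1)}

variable {s} {x : V → ℤ}

namespace edgeLevels

def toSDn (k : edgeLevels s x) : SDn s x := ⟨(Sum.inl k.1.1, k.1.2), k.2⟩

def srcSUp (k : edgeLevels s x) : SUp s x := ⟨(Sum.inr (s k.1.1), k.1.2), k.2⟩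

def toSUp (k : edgeLevels s (-x)) : SUp s x := ⟨(Sum.inl k.1.1, k.1.2), k.2⟩

def srcSDn (k : edgeLevels s (-x)) : SDn s x := ⟨(Sum.inr (s k.1.1), k.1.2), k.2⟩

theorem toSDn_injective : Function.Injective (toSDn (s := s) (x := x)) := by
  rintro ⟨⟨e, i⟩, _⟩ ⟨⟨f, j⟩, _⟩ h
  simpa [toSDn, Subtype.ext_iff] using h

theorem toSUp_injective : Function.Injective (toSUp (s := s) (x := x)) := by
  rintro ⟨⟨e, i⟩, _⟩ ⟨⟨f, j⟩, _⟩ h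
  simpa [toSUp, Subtype.ext_iff] using h

noncomputable instance [Fintype (SDn s x)] : Fintype (edgeLevels s x) :=
  Fintype.ofInjective _ toSDn_injective

noncomputable instance [Fintype (SUp s x)] : Fintype (edgeLevels s (-x)) :=
  Fintype.ofInjective _ toSUp_injective

theorem sum_fiber_toSDn {M : Type*} [AddCommMonoid M] [Fintype (SDn s x)]
    [DecidableEq (SDn s x)] (f : E → M) (q : SDn s x) :
    ∑ k : {k // toSDn k = q}, f k.1.1.1 = Sum.elim f (fun _ => 0) q.1.1 := by
  have hinj : Function.Injective fun k : {k // toSDn k = q} => k.1.1.1 := fun k l _ =>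
    Subtype.ext (toSDn_injective (k.2.trans l.2.symm))
  rw [← finsum_eq_sum_of_fintype, ← finsum_mem_range hinj]
  rcases q with ⟨⟨e | w, i⟩, hq⟩
  · have : Set.range (fun k : {k // toSDn k = ⟨(Sum.inl e, i), hq⟩} => k.1.1.1) = {e} := by
      refine Set.eq_singleton_iff_unique_mem.2 ⟨⟨⟨⟨(e, i), hq⟩, rfl⟩, rfl⟩, ?_⟩
      rintro _ ⟨⟨k, hk⟩, rfl⟩
      simp [toSDn, Subtype.ext_iff] at hk
      exact hk.1
    rw [this, finsum_mem_singleton, Sum.elim_inl]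
  · have : Set.range (fun k : {k // toSDn k = ⟨(Sum.inr w, i), hq⟩} => k.1.1.1) = ∅ := by
      refine Set.eq_empty_iff_forall_notMem.2 ?_
      rintro _ ⟨⟨k, hk⟩, rfl⟩
      simp [toSDn, Subtype.ext_iff] at hk
    rw [this, finsum_mem_empty, Sum.elim_inr]

theorem sum_fiber_srcSDn {M : Type*} [AddCommMonoid M] [Fintype (SUp s x)]
    [DecidableEq (SDn s x)] (f : E → M) (q : SDn s x) :
    ∑ k : {k // srcSDn k = q}, f k.1.1.1 =
      Sum.elim (fun _ => 0) (fun w => ∑ᶠ e ∈ {e | s e = w}, f e) q.1.1 := by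
  have hinj : Function.Injective fun k : {k // srcSDn k = q} => k.1.1.1 := by
    rintro ⟨⟨⟨e, i⟩, hk⟩, hkq⟩ ⟨⟨⟨f, j⟩, hl⟩, hlq⟩ (rfl : e = f)
    have : i = j := by
      simpa [srcSDn, Subtype.ext_iff] using hkq.trans hlq.symm
    subst this
    rfl
  rw [← finsum_eq_sum_of_fintype, ← finsum_mem_range hinj]
  rcases q with ⟨⟨e | w, i⟩, hq⟩
  · have : Set.range (fun k : {k // srcSDn k = ⟨(Sum.inl e, i), hq⟩} => k.1.1.1) = ∅ := by
      refine Set.eq_empty_iff_forall_notMem.2 ?_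
      rintro _ ⟨⟨k, hk⟩, rfl⟩
      simp [srcSDn, Subtype.ext_iff] at hk
    rw [this, finsum_mem_empty, Sum.elim_inl]
  · have : Set.range (fun k : {k // srcSDn k = ⟨(Sum.inr w, i), hq⟩} => k.1.1.1) =
        {e | s e = w} := by
      ext e
      constructor
      · rintro ⟨⟨k, hk⟩, rfl⟩
        simp [srcSDn, Subtype.ext_iff] at hk
        exact hk.1
      · rintro (rfl : s e = w)
        exact ⟨⟨⟨(e, i), hq⟩, rfl⟩, rfl⟩
    rw [this, Sum.elim_inr]

end edgeLevels

end EdgeLevels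

section Vmat

variable {V E A : Type*} {s : E → V} {x : V → ℤ} {h : ℕ}

open edgeLevels

def vmatRow (mup : SUp s x ≃ Fin h) : edgeLevels s x ⊕ edgeLevels s (-x) → Fin h
  | .inl k => mup (srcSUp k)
  | .inr k => mup (toSUp k)

def vmatCol : edgeLevels s x ⊕ edgeLevels s (-x) → SDn s x
  | .inl k => toSDn k
  | .inr k => srcSDn k

def vmatCoef [Star A] (S : E → A) : edgeLevels s x ⊕ edgeLevels s (-x) → A
  | .inl k => S k.1.1
  | .inr k => star (S k.1.1)

theorem Vmat_eq_sum_single [AddCommMonoid A] [Star A] (S : E → A)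
    [Fintype (SUp s x)] [Fintype (SDn s x)] (mup : SUp s x ≃ Fin h) (mdn : SDn s x ≃ Fin h) :
    Vmat s x S mup mdn =
      ∑ k, Matrix.single (vmatRow mup k) (mdn (vmatCol k)) (vmatCoef S k) := by
  rw [Fintype.sum_sum_type]
  refine congrArg₂ (· + ·) ?_ ?_
  · refine (Fintype.sum_of_injective _ toSDn_injective _ _ ?_ fun _ => rfl).symm
    rintro ⟨⟨e | w, i⟩, hq⟩ hnot
    · exact absurd ⟨⟨(e, i), hq⟩, rfl⟩ hnot
    · rfl
  · refine (Fintype.sum_of_injective _ toSUp_injective _ _ ?_ fun _ => rfl).symm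
    rintro ⟨⟨e | w, i⟩, hq⟩ hnot
    · exact absurd ⟨⟨(e, i), hq⟩, rfl⟩ hnot
    · rfl

theorem star_vmatCoef_mul_eq_zero [NonUnitalNonAssocSemiring A] [StarRing A] {S : E → A}
    (hS_orth : ∀ e f, e ≠ f → star (S e) * S f = 0) (mup : SUp s x ≃ Fin h) :
    ∀ k l, k ≠ l → vmatRow mup k = vmatRow mup l →
      star (vmatCoef S k) * vmatCoef S l = 0 := by
  rintro (⟨⟨e, i⟩, hk⟩ | ⟨⟨e, i⟩, hk⟩) (⟨⟨f, j⟩, hl⟩ | ⟨⟨f, j⟩, hl⟩) hne hrow <;>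
    have hrow := congrArg Subtype.val (mup.injective hrow) <;>
    simp only [srcSUp, toSUp, Prod.mk.injEq, Sum.inl.injEq, Sum.inr.injEq,
      reduceCtorEq, false_and] at hrow
  · obtain ⟨-, rfl⟩ := hrow
    exact hS_orth e f fun hef => hne (by subst hef; rfl)
  · obtain ⟨rfl, rfl⟩ := hrow
    exact absurd rfl hne

end Vmat

theorem stmt8_general {V E A : Type*} [NonUnitalCStarAlgebra A]
    (r s : E → V) (p : V → A) (S : E → A)
    (hCK1 : ∀ e, star (S e) * S e = p (r e))
    (hS_orth : ∀ e f, e ≠ f → star (S e) * S f = 0)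
    (x : V → ℤ)
    {h : ℕ} [Fintype (SUp s x)] [Fintype (SDn s x)]
    (mup : SUp s x ≃ Fin h) (mdn : SDn s x ≃ Fin h) :
    star (Vmat s x S mup mdn) * Vmat s x S mup mdn =
      ∑ q : SDn s x, Matrix.single (mdn q) (mdn q)
        (match q.1.1 with
         | Sum.inl e => p (r e)
         | Sum.inr w => ∑ᶠ e ∈ {e | s e = w}, S e * star (S e)) := by
  classical
  rw [Vmat_eq_sum_single, Matrix.star_eq_conjTranspose,
    Matrix.conjTranspose_sum_single_mul_self _ _ _ (star_vmatCoef_mul_eq_zero hS_orth mup),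
    Fintype.sum_sum_type]
  simp only [vmatCol, vmatCoef, hCK1, star_star]
  rw [Matrix.sum_single_diag_fiberwise edgeLevels.toSDn mdn,
    Matrix.sum_single_diag_fiberwise edgeLevels.srcSDn mdn, ← Finset.sum_add_distrib]
  refine Finset.sum_congr rfl fun q _ => ?_
  rw [← Matrix.single_add, edgeLevels.sum_fiber_toSDn (fun e => p (r e)),
    edgeLevels.sum_fiber_srcSDn (fun e => S e * star (S e))]
  rcases q with ⟨⟨e | w, i⟩, hq⟩ <;> simp

theorem stmt8 {V E A : Type*} [Countable V] [Countable E] [NonUnitalCStarAlgebra A]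
    (r s : E → V) (p : V → A) (S : E → A)
    (hp_star : ∀ v, star (p v) = p v)
    (hp_idem : ∀ v, p v * p v = p v)
    (hp_orth : ∀ v w, v ≠ w → p v * p w = 0)
    (hCK1 : ∀ e, star (S e) * S e = p (r e))
    (hS_orth : ∀ e f, e ≠ f → star (S e) * S f = 0)
    (hCK3 : ∀ e, p (s e) * S e = S e)
    (x : V → ℤ) (hsupp : {v | x v ≠ 0}.Finite)
    (hemit : ∀ v, x v ≠ 0 → {e | s e = v}.Finite)
    (hker : ∀ v, ∑ᶠ e ∈ {e | r e = v}, x (s e) = x v)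
    {h : ℕ} [Fintype (SUp s x)] [Fintype (SDn s x)]
    (mup : SUp s x ≃ Fin h) (mdn : SDn s x ≃ Fin h)
    (hcomp : ∀ (q : SUp s x) (q' : SDn s x), mup q = mdn q' → rext r q.1.1 = rext r q'.1.1) :
    star (Vmat s x S mup mdn) * Vmat s x S mup mdn =
      ∑ q : SDn s x, Matrix.single (mdn q) (mdn q)
        (match q.1.1 with
         | Sum.inl e => p (r e)
         | Sum.inr w => ∑ᶠ e ∈ {e | s e = w}, S e * star (S e)) :=
  stmt8_general r s p S hCK1 hS_orth x mup mdn
end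

section
/- With notation as in the context, V is a partial isometry in M_h(A), i.e. V V* V = V. -/
/-!
Index `V` by `S↑(x) × S↓(x)` instead of `Fin h`. Every entry is `0`, `s_e` or `s_e*`, and each
`s_e` is a partial isometry because `s_e* s_e = p_{r(e)}` is idempotent. Two nonzero entries in a
common row are `s_e, s_f`, and two in a common column are `s_e*, s_f*`, with `e ≠ f`; so
`s_e* s_f = 0` kills every term of `(V V* V)_{ud} = ∑ V_{ud'} V_{u'd'}* V_{u'd}` except
`V_{ud} V_{ud}* V_{ud} = V_{ud}`.
-/

open scoped Matrix

theorem mul_star_mul_self_of_isIdempotentElem {A : Type*} [NonUnitalNormedRing A] [StarRing A]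
    [CStarRing A] {a : A} (ha : IsIdempotentElem (star a * a)) : a * star a * a = a := by
  have hP : star a * a * (star a * a) = star a * a := ha
  refine sub_eq_zero.mp ((CStarRing.star_mul_self_eq_zero_iff _).mp ?_)
  simp only [star_sub, star_mul, star_star, sub_mul, mul_sub]
  simp only [← mul_assoc] at hP ⊢
  simp only [hP, sub_self]

theorem Matrix.mul_conjTranspose_mul_self_of_orthogonal_entries {m n R : Type*} [Fintype m]
    [Fintype n] [NonUnitalSemiring R] [Star R] (M : Matrix m n R)
    (hrow : ∀ u d d', d ≠ d' → star (M u d) * M u d' = 0)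
    (hcol : ∀ u u' d, u ≠ u' → M u d * star (M u' d) = 0)
    (hentry : ∀ u d, M u d * star (M u d) * M u d = M u d) :
    M * Mᴴ * M = M := by
  ext u d
  simp only [mul_apply, conjTranspose_apply, Finset.sum_mul]
  rw [Finset.sum_eq_single u, Finset.sum_eq_single d, hentry]
  · intro d' _ hd'
    rw [mul_assoc, hrow u d' d hd', mul_zero]
  · simp
  · intro u' _ hu'
    refine Finset.sum_eq_zero fun d' _ => ?_
    obtain rfl | hd' := eq_or_ne d' d
    · rw [hcol u u' d' hu'.symm, zero_mul]
    · rw [mul_assoc, hrow u' d' d hd', mul_zero]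
  · simp

section
variable {V E A : Type*} (s : E → V) (x : V → ℤ) (S : E → A)

open scoped Classical in
noncomputable def VmatIdx [Zero A] [Star A] : Matrix (SUp s x) (SDn s x) A :=
  Matrix.of fun u d =>
    match u.1.1, d.1.1 with
    | .inr w, .inl e => if s e = w ∧ u.1.2 = d.1.2 then S e else 0
    | .inl e, .inr w => if s e = w ∧ u.1.2 = d.1.2 then star (S e) else 0
    | _, _ => 0

/- The membership proofs inside `Vmat` are only well typed up to unfolding `SUp` and `SDn`, which
defeats `simp`; hence the explicit rewriting. -/
theorem Vmat_eq_submatrix [AddCommMonoid A] [Star A] {h : ℕ} [Fintype (SUp s x)]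
    [Fintype (SDn s x)] (mup : SUp s x ≃ Fin h) (mdn : SDn s x ≃ Fin h) :
    Vmat s x S mup mdn = (VmatIdx s x S).submatrix mup.symm mdn.symm := by
  classical
  ext i j
  obtain ⟨u, rfl⟩ := mup.surjective i
  obtain ⟨d, rfl⟩ := mdn.surjective j
  rw [Matrix.submatrix_apply, Equiv.symm_apply_apply, Equiv.symm_apply_apply, Vmat,
    Matrix.add_apply, Matrix.sum_apply, Matrix.sum_apply, Finset.sum_eq_single d,
    Finset.sum_eq_single u]
  · rcases u with ⟨⟨e | w, i⟩, hu⟩ <;> rcases d with ⟨⟨e' | w', j⟩, hd⟩ <;> dsimp only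
    · rw [Matrix.single_apply_of_row_ne (mup.injective.ne fun h => by cases h),
        Matrix.single_apply_of_col_ne _ _ (mdn.injective.ne fun h => by cases h), add_zero]
      rfl
    · rw [Matrix.zero_apply, zero_add]
      show _ = if s e = w' ∧ i = j then star (S e) else 0
      by_cases hc : s e = w' ∧ i = j
      · obtain ⟨rfl, rfl⟩ := hc
        rw [if_pos ⟨rfl, rfl⟩]
        exact Matrix.single_apply_same ..
      · rw [if_neg hc]
        exact Matrix.single_apply_of_col_ne _ _
          (mdn.injective.ne fun h => hc (by cases h; exact ⟨rfl, rfl⟩)) _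
    · rw [Matrix.zero_apply, add_zero]
      show _ = if s e' = w ∧ i = j then S e' else 0
      by_cases hc : s e' = w ∧ i = j
      · obtain ⟨rfl, rfl⟩ := hc
        rw [if_pos ⟨rfl, rfl⟩]
        exact Matrix.single_apply_same ..
      · rw [if_neg hc]
        exact Matrix.single_apply_of_row_ne
          (mup.injective.ne fun h => hc (by cases h; exact ⟨rfl, rfl⟩)) _ _ _
    · exact add_zero _
  · rintro ⟨⟨e | w, k⟩, hq⟩ - hne
    · exact Matrix.single_apply_of_row_ne (mup.injective.ne hne) _ _ _
    · rfl
  · simp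
  · rintro ⟨⟨e | w, k⟩, hq⟩ - hne
    · exact Matrix.single_apply_of_col_ne _ _ (mdn.injective.ne hne) _
    · rfl
  · simp

theorem VmatIdx_mul_conjTranspose_mul_self [NonUnitalSemiring A] [StarRing A]
    [Fintype (SUp s x)] [Fintype (SDn s x)]
    (hpi : ∀ e, S e * star (S e) * S e = S e)
    (horth : ∀ e f, e ≠ f → star (S e) * S f = 0) :
    VmatIdx s x S * (VmatIdx s x S)ᴴ * VmatIdx s x S = VmatIdx s x S := by
  apply Matrix.mul_conjTranspose_mul_self_of_orthogonal_entries
  · rintro ⟨⟨e | w, i⟩, hu⟩ ⟨⟨e₁ | w₁, j₁⟩, h₁⟩ ⟨⟨e₂ | w₂, j₂⟩, h₂⟩ hne <;>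
      simp only [VmatIdx, Matrix.of_apply] <;> (try split_ifs) <;> simp_all
  · rintro ⟨⟨e₁ | w₁, i₁⟩, h₁⟩ ⟨⟨e₂ | w₂, i₂⟩, h₂⟩ ⟨⟨e | w, j⟩, hd⟩ hne <;>
      simp only [VmatIdx, Matrix.of_apply] <;> (try split_ifs) <;> simp_all
  · have hpi_star : ∀ e, star (S e) * star (star (S e)) * star (S e) = star (S e) := fun e => by
      simpa only [star_mul, star_star, mul_assoc] using congrArg star (hpi e)
    rintro ⟨⟨e | w, i⟩, hu⟩ ⟨⟨e' | w', j⟩, hd⟩ <;>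
      simp only [VmatIdx, Matrix.of_apply] <;> (try split_ifs) <;>
      simp only [hpi, hpi_star, star_zero, mul_zero]

end

theorem stmt9_general {V E A : Type*} [NonUnitalCStarAlgebra A]
    (r s : E → V) (p : V → A) (S : E → A)
    (hp_idem : ∀ v, p v * p v = p v)
    (hCK1 : ∀ e, star (S e) * S e = p (r e))
    (hS_orth : ∀ e f, e ≠ f → star (S e) * S f = 0)
    (x : V → ℤ)
    {h : ℕ} [Fintype (SUp s x)] [Fintype (SDn s x)]
    (mup : SUp s x ≃ Fin h) (mdn : SDn s x ≃ Fin h) :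
    Vmat s x S mup mdn * star (Vmat s x S mup mdn) * Vmat s x S mup mdn =
      Vmat s x S mup mdn := by
  have hpi : ∀ e, S e * star (S e) * S e = S e := fun e =>
    mul_star_mul_self_of_isIdempotentElem (by rw [IsIdempotentElem, hCK1, hp_idem])
  rw [Matrix.star_eq_conjTranspose, Vmat_eq_submatrix, Matrix.conjTranspose_submatrix,
    Matrix.submatrix_mul_equiv, Matrix.submatrix_mul_equiv,
    VmatIdx_mul_conjTranspose_mul_self s x S hpi hS_orth]

theorem stmt9 {V E A : Type*} [Countable V] [Countable E] [NonUnitalCStarAlgebra A]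
    (r s : E → V) (p : V → A) (S : E → A)
    (hp_star : ∀ v, star (p v) = p v)
    (hp_idem : ∀ v, p v * p v = p v)
    (hp_orth : ∀ v w, v ≠ w → p v * p w = 0)
    (hCK1 : ∀ e, star (S e) * S e = p (r e))
    (hS_orth : ∀ e f, e ≠ f → star (S e) * S f = 0)
    (hCK3 : ∀ e, p (s e) * S e = S e)
    (x : V → ℤ) (hsupp : {v | x v ≠ 0}.Finite)
    (hemit : ∀ v, x v ≠ 0 → {e | s e = v}.Finite)
    (hker : ∀ v, ∑ᶠ e ∈ {e | r e = v}, x (s e) = x v)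
    {h : ℕ} [Fintype (SUp s x)] [Fintype (SDn s x)]
    (mup : SUp s x ≃ Fin h) (mdn : SDn s x ≃ Fin h)
    (hcomp : ∀ (q : SUp s x) (q' : SDn s x), mup q = mdn q' → rext r q.1.1 = rext r q'.1.1) :
    Vmat s x S mup mdn * star (Vmat s x S mup mdn) * Vmat s x S mup mdn =
      Vmat s x S mup mdn :=
  stmt9_general r s p S hp_idem hCK1 hS_orth x mup mdn
end

section
/- With notation as in the context, assume additionally that p_w = ∑_{e ∈ s⁻¹(w)} s_e s_e* for every vertex w with x_w ≠ 0 (the relative Cuntz–Krieger relation on the support of x). Then VV* = P. -/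
/-!
Write `V = ∑ s_e E_{m↑(s e,i), m↓(e,i)} + ∑ s_e* E_{m↑(e,i), m↓(s e,i)}`. The matrix units of
the first sum sit in pairwise distinct columns indexed by edges, those of the second in columns
indexed by vertices, so in `VV*` every cross product vanishes except those of two terms `s_e*`,
`s_f*` of the second sum sharing a column `(s e, i) = (s f, i)`, and these vanish by orthogonality
of the ranges unless `e = f`. What remains is diagonal: `s_e* s_e = p_{r(e)}` in the row
`m↑(e,i)`, and in the row `m↑(w,i)` the sum of `s_e s_e*` over the edges leaving `w`, which is
`p_w` by the relative Cuntz–Krieger relation, as `x_w ≥ i ≥ 1`.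
-/

open Matrix

namespace Matrix

variable {ι κ l m n α : Type*} [Fintype n] [NonUnitalNonAssocSemiring α]

theorem single_mul_single_eq_ite [DecidableEq l] [DecidableEq m] [DecidableEq n]
    (i : l) (j j' : n) (k : m) (a b : α) :
    single i j a * single j' k b = if j = j' then single i k (a * b) else 0 := by
  split_ifs with hj
  · rw [hj, single_mul_single_same]
  · exact single_mul_single_of_ne _ _ _ _ hj _

variable [StarRing α] [Fintype ι] [Fintype κ]

theorem sum_mul_conjTranspose_sum_eq_zero (F : ι → Matrix l n α) (G : κ → Matrix m n α)
    (h : ∀ i j, F i * (G j)ᴴ = 0) : (∑ i, F i) * (∑ j, G j)ᴴ = 0 := by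
  simp only [conjTranspose_sum, Matrix.sum_mul, Matrix.mul_sum, h, Finset.sum_const_zero]

theorem sum_mul_conjTranspose_sum_of_pairwise (F : ι → Matrix m n α)
    (h : Pairwise fun i j => F i * (F j)ᴴ = 0) :
    (∑ i, F i) * (∑ i, F i)ᴴ = ∑ i, F i * (F i)ᴴ := by
  simp only [conjTranspose_sum, Matrix.sum_mul, Matrix.mul_sum]
  exact Finset.sum_congr rfl fun i _ => Fintype.sum_eq_single i fun j hj => h hj

end Matrix

section Graph

variable {V E : Type*} {s : E → V} {x : V → ℤ} {h : ℕ}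

theorem sum_SDn_edge_fiber_eq_finsum [Fintype (SDn s x)] [DecidableEq ((E ⊕ V) × ℤ)]
    {N : Type*} [AddCommMonoid N] (f : E → N) {v : V} {j : ℤ}
    (hvj : (Sum.inr v, j) ∈ SUp s x) :
    ∑ q : SDn s x, (match q with
      | ⟨(Sum.inl e, i), _⟩ => if (Sum.inr v, j) = ((Sum.inr (s e), i) : (E ⊕ V) × ℤ)
          then f e else 0
      | ⟨(Sum.inr _, _), _⟩ => 0) =
    ∑ᶠ e ∈ {e | s e = v}, f e := by
  let ι : {e | s e = v} → SDn s x := fun e => ⟨(Sum.inl e.1, j), by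
    show 1 ≤ j ∧ j ≤ x (s e.1)
    rw [e.2]
    exact hvj⟩
  have hι : Function.Injective ι := fun e e' hee' => by
    simpa [ι, Subtype.ext_iff] using hee'
  symm
  rw [← finsum_set_coe_eq_finsum_mem]
  conv_rhs => rw [← finsum_eq_sum_of_fintype, ← finsum_mem_univ]
  rw [finsum_mem_inter_support_eq' _ _ (Set.range ι) ?_, finsum_mem_range hι]
  · exact finsum_congr fun e => by simp [ι, show s e = v from e.2]
  rintro ⟨⟨e | w, i⟩, _⟩ hq
  · simp only [Function.mem_support, ne_eq, ite_eq_right_iff, Prod.mk.injEq, Sum.inr.injEq,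
      not_forall] at hq
    obtain ⟨⟨rfl, rfl⟩, -⟩ := hq
    exact iff_of_true trivial ⟨⟨e, rfl⟩, rfl⟩
  · exact absurd rfl hq

theorem sum_SDn_edge_eq_sum_SUp_vertex {M N : Type*} [AddCommMonoid M] [AddCommMonoid N]
    [Fintype (SUp s x)] [Fintype (SDn s x)]
    (F : SUp s x → M →+ N) (c : E → M) (d : V → M)
    (hemit : ∀ v, x v ≠ 0 → {e | s e = v}.Finite)
    (hd : ∀ v, x v ≠ 0 → d v = ∑ᶠ e ∈ {e | s e = v}, c e) :
    ∑ q : SDn s x, (match q with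
      | ⟨(Sum.inl e, i), hq⟩ => F ⟨(Sum.inr (s e), i), hq⟩ (c e)
      | ⟨(Sum.inr _, _), _⟩ => 0) =
    ∑ u : SUp s x, (match u with
      | ⟨(Sum.inl _, _), _⟩ => 0
      | ⟨(Sum.inr v, _), _⟩ => F u (d v)) := by
  classical
  -- `ψ q u` is the contribution of the edge term `q` to the vertex row `u`.
  let ψ : SDn s x → SUp s x → N := fun q u => match q with
    | ⟨(Sum.inl e, i), _⟩ => if u.1 = (Sum.inr (s e), i) then F u (c e) else 0
    | ⟨(Sum.inr _, _), _⟩ => 0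
  calc _ = ∑ q, ∑ u, ψ q u := Finset.sum_congr rfl fun q _ => ?_
    _ = ∑ u, ∑ q, ψ q u := Finset.sum_comm
    _ = _ := Finset.sum_congr rfl fun u _ => ?_
  · rcases q with ⟨⟨e | v, i⟩, hq⟩
    · rw [Fintype.sum_eq_single ⟨(Sum.inr (s e), i), hq⟩
        fun u hu => if_neg fun heq => hu (Subtype.ext heq)]
      exact (if_pos rfl).symm
    · exact Finset.sum_const_zero.symm
  · rcases u with ⟨⟨e | v, j⟩, hu⟩
    · refine Finset.sum_eq_zero fun q _ => ?_
      rcases q with ⟨⟨e' | v', i⟩, _⟩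
      · exact if_neg (by simp)
      · rfl
    have hv : x v ≠ 0 := by
      obtain ⟨h1, h2⟩ : 1 ≤ j ∧ j ≤ x v := hu
      omega
    refine (sum_SDn_edge_fiber_eq_finsum (fun e => F ⟨(Sum.inr v, j), hu⟩ (c e)) hu).trans ?_
    rw [← AddMonoidHom.map_finsum_mem _ _ (hemit v hv), ← hd v hv]

namespace Vmat

variable {A : Type*} (mup : SUp s x ≃ Fin h) (mdn : SDn s x ≃ Fin h) (S : E → A)

section AddCommMonoid

variable [AddCommMonoid A] [Star A]

noncomputable def sTerm (q : SDn s x) : Matrix (Fin h) (Fin h) A :=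
  match q with
  | ⟨(Sum.inl e, i), hq⟩ =>
      single (mup ⟨(Sum.inr (s e), i), hq⟩) (mdn ⟨(Sum.inl e, i), hq⟩) (S e)
  | ⟨(Sum.inr _, _), _⟩ => 0

noncomputable def sStarTerm (u : SUp s x) : Matrix (Fin h) (Fin h) A :=
  match u with
  | ⟨(Sum.inl e, i), hu⟩ =>
      single (mup ⟨(Sum.inl e, i), hu⟩) (mdn ⟨(Sum.inr (s e), i), hu⟩) (star (S e))
  | ⟨(Sum.inr _, _), _⟩ => 0

theorem eq_sum_sTerm_add_sum_sStarTerm [Fintype (SUp s x)] [Fintype (SDn s x)] :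
    Vmat s x S mup mdn = ∑ q, sTerm mup mdn S q + ∑ u, sStarTerm mup mdn S u :=
  rfl

end AddCommMonoid

variable [NonUnitalNonAssocSemiring A] [StarRing A]

theorem sTerm_mul_conjTranspose_sStarTerm (q : SDn s x) (u : SUp s x) :
    sTerm mup mdn S q * (sStarTerm mup mdn S u)ᴴ = 0 := by
  rcases q with ⟨⟨e | v, i⟩, hq⟩ <;> rcases u with ⟨⟨f | w, j⟩, hu⟩ <;>
    simp [sTerm, sStarTerm, mdn.injective.eq_iff, Subtype.ext_iff]

theorem sStarTerm_mul_conjTranspose_sTerm (u : SUp s x) (q : SDn s x) :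
    sStarTerm mup mdn S u * (sTerm mup mdn S q)ᴴ = 0 := by
  rcases q with ⟨⟨e | v, i⟩, hq⟩ <;> rcases u with ⟨⟨f | w, j⟩, hu⟩ <;>
    simp [sTerm, sStarTerm, mdn.injective.eq_iff, Subtype.ext_iff]

theorem pairwise_sTerm_mul_conjTranspose :
    Pairwise fun q q' => sTerm mup mdn S q * (sTerm mup mdn S q')ᴴ = 0 := by
  rintro ⟨⟨e | v, i⟩, hq⟩ ⟨⟨f | w, j⟩, hq'⟩ hne <;>
    simp [sTerm, single_mul_single_eq_ite, mdn.injective.eq_iff, Subtype.ext_iff]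
  rintro rfl rfl
  exact absurd rfl hne

theorem pairwise_sStarTerm_mul_conjTranspose (hS_orth : ∀ e f, e ≠ f → star (S e) * S f = 0) :
    Pairwise fun u u' => sStarTerm mup mdn S u * (sStarTerm mup mdn S u')ᴴ = 0 := by
  rintro ⟨⟨e | v, i⟩, hu⟩ ⟨⟨f | w, j⟩, hu'⟩ hne <;>
    simp [sStarTerm, single_mul_single_eq_ite, mdn.injective.eq_iff, Subtype.ext_iff]
  rintro - rfl
  rw [hS_orth e f (by rintro rfl; exact hne rfl), single_zero]

variable [Fintype (SUp s x)]

theorem sum_sStarTerm_mul_conjTranspose_self (r : E → V) (p : V → A)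
    (hCK1 : ∀ e, star (S e) * S e = p (r e)) :
    ∑ u, sStarTerm mup mdn S u * (sStarTerm mup mdn S u)ᴴ =
      ∑ u : SUp s x, (match u with
        | ⟨(Sum.inl e, _), _⟩ => single (mup u) (mup u) (p (r e))
        | ⟨(Sum.inr _, _), _⟩ => 0) := by
  refine Finset.sum_congr rfl fun u _ => ?_
  rcases u with ⟨⟨e | v, i⟩, hu⟩ <;> simp [sStarTerm, hCK1]

variable [Fintype (SDn s x)]

theorem mul_star_eq_sum (hS_orth : ∀ e f, e ≠ f → star (S e) * S f = 0) :
    Vmat s x S mup mdn * star (Vmat s x S mup mdn) =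
      ∑ q, sTerm mup mdn S q * (sTerm mup mdn S q)ᴴ +
        ∑ u, sStarTerm mup mdn S u * (sStarTerm mup mdn S u)ᴴ := by
  rw [eq_sum_sTerm_add_sum_sStarTerm, star_eq_conjTranspose, conjTranspose_add, add_mul, mul_add,
    mul_add, sum_mul_conjTranspose_sum_eq_zero _ _ (sTerm_mul_conjTranspose_sStarTerm mup mdn S),
    sum_mul_conjTranspose_sum_eq_zero _ _ (sStarTerm_mul_conjTranspose_sTerm mup mdn S),
    sum_mul_conjTranspose_sum_of_pairwise _ (pairwise_sTerm_mul_conjTranspose mup mdn S),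
    sum_mul_conjTranspose_sum_of_pairwise _
      (pairwise_sStarTerm_mul_conjTranspose mup mdn S hS_orth), add_zero, zero_add]

theorem sum_sTerm_mul_conjTranspose_self (p : V → A)
    (hemit : ∀ v, x v ≠ 0 → {e | s e = v}.Finite)
    (hRCK : ∀ w, x w ≠ 0 → p w = ∑ᶠ e ∈ {e | s e = w}, S e * star (S e)) :
    ∑ q, sTerm mup mdn S q * (sTerm mup mdn S q)ᴴ =
      ∑ u : SUp s x, (match u with
        | ⟨(Sum.inl _, _), _⟩ => 0
        | ⟨(Sum.inr w, _), _⟩ => single (mup u) (mup u) (p w)) := by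
  refine (Finset.sum_congr rfl fun q _ => ?_).trans (sum_SDn_edge_eq_sum_SUp_vertex
    (fun u => singleAddMonoidHom (mup u) (mup u)) (fun e => S e * star (S e)) p hemit hRCK)
  rcases q with ⟨⟨e | v, i⟩, hq⟩ <;> simp [sTerm]

end Vmat

end Graph

theorem stmt11_general {V E A : Type*} [NonUnitalCStarAlgebra A]
    (r s : E → V) (p : V → A) (S : E → A)
    (hCK1 : ∀ e, star (S e) * S e = p (r e))
    (hS_orth : ∀ e f, e ≠ f → star (S e) * S f = 0)
    (x : V → ℤ)
    (hemit : ∀ v, x v ≠ 0 → {e | s e = v}.Finite)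
    {h : ℕ} [Fintype (SUp s x)] [Fintype (SDn s x)]
    (mup : SUp s x ≃ Fin h) (mdn : SDn s x ≃ Fin h)
    (hRCK : ∀ w, x w ≠ 0 → p w = ∑ᶠ e ∈ {e | s e = w}, S e * star (S e)) :
    Vmat s x S mup mdn * star (Vmat s x S mup mdn) = Pmat r s x p mup := by
  rw [Vmat.mul_star_eq_sum mup mdn S hS_orth,
    Vmat.sum_sTerm_mul_conjTranspose_self mup mdn S p hemit hRCK,
    Vmat.sum_sStarTerm_mul_conjTranspose_self mup mdn S r p hCK1, ← Finset.sum_add_distrib, Pmat]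
  refine Finset.sum_congr rfl fun u _ => ?_
  rcases u with ⟨⟨e | v, i⟩, hu⟩ <;> simp [rext]

theorem stmt11 {V E A : Type*} [Countable V] [Countable E] [NonUnitalCStarAlgebra A]
    (r s : E → V) (p : V → A) (S : E → A)
    (hp_star : ∀ v, star (p v) = p v)
    (hp_idem : ∀ v, p v * p v = p v)
    (hp_orth : ∀ v w, v ≠ w → p v * p w = 0)
    (hCK1 : ∀ e, star (S e) * S e = p (r e))
    (hS_orth : ∀ e f, e ≠ f → star (S e) * S f = 0)
    (hCK3 : ∀ e, p (s e) * S e = S e)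
    (x : V → ℤ) (hsupp : {v | x v ≠ 0}.Finite)
    (hemit : ∀ v, x v ≠ 0 → {e | s e = v}.Finite)
    (hker : ∀ v, ∑ᶠ e ∈ {e | r e = v}, x (s e) = x v)
    {h : ℕ} [Fintype (SUp s x)] [Fintype (SDn s x)]
    (mup : SUp s x ≃ Fin h) (mdn : SDn s x ≃ Fin h)
    (hcomp : ∀ (q : SUp s x) (q' : SDn s x), mup q = mdn q' → rext r q.1.1 = rext r q'.1.1)
    (hRCK : ∀ w, x w ≠ 0 → p w = ∑ᶠ e ∈ {e | s e = w}, S e * star (S e)) :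
    Vmat s x S mup mdn * star (Vmat s x S mup mdn) = Pmat r s x p mup :=
  stmt11_general r s p S hCK1 hS_orth x hemit mup mdn hRCK
end

section
/- With notation as in the context, assume additionally that p_w = ∑_{e ∈ s⁻¹(w)} s_e s_e* for every vertex w with x_w ≠ 0 (the relative Cuntz–Krieger relation on the support of x). Then V*V = P. -/
open Matrix

theorem Matrix.star_sum_single_mul_sum_single {ι n α : Type*} [Fintype ι] [Fintype n]
    [DecidableEq n] [NonUnitalSemiring α] [StarRing α] (row col : ι → n) (a : ι → α)
    (horth : ∀ k l, k ≠ l → row k = row l → star (a k) * a l = 0) :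
    star (∑ k, single (row k) (col k) (a k)) * ∑ k, single (row k) (col k) (a k) =
      ∑ k, single (col k) (col k) (star (a k) * a k) := by
  rw [star_sum, Finset.sum_mul_sum]
  refine Finset.sum_congr rfl fun k _ => ?_
  simp only [star_eq_conjTranspose, conjTranspose_single]
  rw [Finset.sum_eq_single k (fun l _ hlk => ?_) (by simp), single_mul_single_same]
  by_cases hrow : row k = row l
  · rw [hrow, single_mul_single_same, horth k l (Ne.symm hlk) hrow, single_zero]
  · exact single_mul_single_of_ne _ _ _ _ hrow _

def Equiv.subtypeSumProd {α β γ : Type*} (P : (α ⊕ β) × γ → Prop) :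
    {q // P q} ≃ {p : α × γ // P (.inl p.1, p.2)} ⊕ {p : β × γ // P (.inr p.1, p.2)} where
  toFun
    | ⟨(.inl a, c), h⟩ => .inl ⟨(a, c), h⟩
    | ⟨(.inr b, c), h⟩ => .inr ⟨(b, c), h⟩
  invFun
    | .inl p => ⟨(.inl p.1.1, p.1.2), p.2⟩
    | .inr p => ⟨(.inr p.1.1, p.1.2), p.2⟩
  left_inv := by rintro ⟨⟨a | b, c⟩, h⟩ <;> rfl
  right_inv := by rintro (p | p) <;> rfl

section SubtypeSumProd

variable {α β γ : Type*} (P : (α ⊕ β) × γ → Prop) [Fintype {q // P q}]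

noncomputable instance Subtype.fintypeInlProd : Fintype {p : α × γ // P (.inl p.1, p.2)} :=
  Fintype.ofInjective (fun p => ((Equiv.subtypeSumProd P).symm (.inl p)))
    ((Equiv.injective _).comp Sum.inl_injective)

noncomputable instance Subtype.fintypeInrProd : Fintype {p : β × γ // P (.inr p.1, p.2)} :=
  Fintype.ofInjective (fun p => ((Equiv.subtypeSumProd P).symm (.inr p)))
    ((Equiv.injective _).comp Sum.inr_injective)

theorem Fintype.sum_subtype_sum_prod {M : Type*} [AddCommMonoid M] (f : {q // P q} → M) :
    ∑ q, f q = ∑ a : {p : α × γ // P (.inl p.1, p.2)}, f ⟨(.inl a.1.1, a.1.2), a.2⟩ +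
      ∑ b : {p : β × γ // P (.inr p.1, p.2)}, f ⟨(.inr b.1.1, b.1.2), b.2⟩ := by
  rw [← Fintype.sum_equiv (Equiv.subtypeSumProd P).symm _ f (fun _ => rfl), Fintype.sum_sum_type]
  rfl

end SubtypeSumProd

section Indices

variable {V E : Type*} (s : E → V) (x : V → ℤ)

abbrev SUp.edgePart : Type _ := {p : E × ℤ // (Sum.inl p.1, p.2) ∈ SUp s x}

abbrev SDn.edgePart : Type _ := {p : E × ℤ // (Sum.inl p.1, p.2) ∈ SDn s x}

abbrev SDn.vertexPart : Type _ := {p : V × ℤ // (Sum.inr p.1, p.2) ∈ SDn s x}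

variable {s x}

def SUp.edgePart.source (b : SUp.edgePart s x) : SDn.vertexPart s x := ⟨(s b.1.1, b.1.2), b.2⟩

theorem SUp.edgePart.sum_source_eq_finsum [Fintype (SUp s x)] [DecidableEq V] {M : Type*}
    [AddCommMonoid M] (f : E → M) (c : SDn.vertexPart s x) :
    ∑ b : {b : SUp.edgePart s x // b.source = c}, f b.1.1.1 = ∑ᶠ e ∈ {e | s e = c.1.1}, f e := by
  obtain ⟨⟨w, j⟩, hc⟩ := c
  rw [← finsum_eq_sum_of_fintype, ← finsum_set_coe_eq_finsum_mem]
  refine finsum_eq_of_bijective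
    (fun b => ⟨b.1.1.1, congrArg (fun c : SDn.vertexPart s x => c.1.1) b.2⟩) ⟨?_, ?_⟩ fun _ => rfl
  · rintro ⟨⟨⟨e, i⟩, hm⟩, hb⟩ ⟨⟨⟨e', i'⟩, hm'⟩, hb'⟩ he
    have hij : i = j := congrArg (fun c : SDn.vertexPart s x => c.1.2) hb
    have hi'j : i' = j := congrArg (fun c : SDn.vertexPart s x => c.1.2) hb'
    have hee' : e = e' := congrArg Subtype.val he
    subst hij hi'j hee'
    rfl
  · rintro ⟨e, he : s e = w⟩
    have hej : (Sum.inl e, j) ∈ SUp s x := by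
      show 1 ≤ j ∧ j ≤ -x (s e)
      rwa [he]
    exact ⟨⟨⟨(e, j), hej⟩, by simp [SUp.edgePart.source, he]⟩, rfl⟩

theorem sum_single_edgePart_eq_sum_single_vertexPart {A n : Type*} [AddCommMonoid A] [DecidableEq n]
    [Fintype (SUp s x)] [Fintype (SDn s x)] [DecidableEq V] (col : SDn s x → n) (f : E → A)
    (g : V → A)
    (hg : ∀ w, x w < 0 → g w = ∑ᶠ e ∈ {e | s e = w}, f e) :
    ∑ b : SUp.edgePart s x, single (col ⟨(.inr (s b.1.1), b.1.2), b.2⟩)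
        (col ⟨(.inr (s b.1.1), b.1.2), b.2⟩) (f b.1.1) =
      ∑ c : SDn.vertexPart s x, single (col ⟨(.inr c.1.1, c.1.2), c.2⟩)
        (col ⟨(.inr c.1.1, c.1.2), c.2⟩) (g c.1.1) := by
  set d : SDn.vertexPart s x → n := fun c => col ⟨(.inr c.1.1, c.1.2), c.2⟩
  change ∑ b : SUp.edgePart s x, single (d b.source) (d b.source) (f b.1.1) =
    ∑ c, single (d c) (d c) (g c.1.1)
  rw [← Fintype.sum_fiberwise SUp.edgePart.source]
  refine Fintype.sum_congr _ _ fun c => ?_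
  have hxc : x c.1.1 < 0 := by
    have hc : 1 ≤ c.1.2 ∧ c.1.2 ≤ -x c.1.1 := c.2
    omega
  rw [hg _ hxc, ← SUp.edgePart.sum_source_eq_finsum]
  exact (Fintype.sum_congr _ _ fun b => by rw [b.2]; rfl).trans
    (map_sum (singleAddMonoidHom (α := A) (d c) (d c)) _ _).symm

variable {A : Type*} {h : ℕ} [Fintype (SUp s x)] [Fintype (SDn s x)]
  (mup : SUp s x ≃ Fin h) (mdn : SDn s x ≃ Fin h)

-- `a.2 : (inl e, i) ∈ S↓` also proves `(inr (s e), i) ∈ S↑`: both unfold to `1 ≤ i ≤ x (s e)`.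
theorem Vmat_eq_sum_single_s12 [AddCommMonoid A] [Star A] (S : E → A) :
    Vmat s x S mup mdn =
      ∑ a : SDn.edgePart s x, single (mup ⟨(.inr (s a.1.1), a.1.2), a.2⟩)
          (mdn ⟨(.inl a.1.1, a.1.2), a.2⟩) (S a.1.1) +
        ∑ b : SUp.edgePart s x, single (mup ⟨(.inl b.1.1, b.1.2), b.2⟩)
          (mdn ⟨(.inr (s b.1.1), b.1.2), b.2⟩) (star (S b.1.1)) := by
  rw [Vmat, Fintype.sum_subtype_sum_prod, Fintype.sum_subtype_sum_prod]
  simp only [Finset.sum_const_zero, add_zero]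

theorem star_Vmat_mul_Vmat [NonUnitalSemiring A] [StarRing A] (r : E → V) (p : V → A)
    (S : E → A) (hCK1 : ∀ e, star (S e) * S e = p (r e))
    (hS_orth : ∀ e f, e ≠ f → star (S e) * S f = 0) :
    star (Vmat s x S mup mdn) * Vmat s x S mup mdn =
      ∑ a : SDn.edgePart s x, single (mdn ⟨(.inl a.1.1, a.1.2), a.2⟩)
          (mdn ⟨(.inl a.1.1, a.1.2), a.2⟩) (p (r a.1.1)) +
        ∑ b : SUp.edgePart s x, single (mdn ⟨(.inr (s b.1.1), b.1.2), b.2⟩)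
          (mdn ⟨(.inr (s b.1.1), b.1.2), b.2⟩) (S b.1.1 * star (S b.1.1)) := by
  rw [Vmat_eq_sum_single_s12]
  have key := star_sum_single_mul_sum_single
    (Sum.elim (fun a : SDn.edgePart s x => mup ⟨(.inr (s a.1.1), a.1.2), a.2⟩)
      (fun b : SUp.edgePart s x => mup ⟨(.inl b.1.1, b.1.2), b.2⟩))
    (Sum.elim (fun a : SDn.edgePart s x => mdn ⟨(.inl a.1.1, a.1.2), a.2⟩)
      (fun b : SUp.edgePart s x => mdn ⟨(.inr (s b.1.1), b.1.2), b.2⟩))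
    (Sum.elim (fun a : SDn.edgePart s x => S a.1.1) (fun b => star (S b.1.1))) ?_
  · simpa only [Fintype.sum_sum_type, Sum.elim_inl, Sum.elim_inr, hCK1, star_star] using key
  rintro (⟨⟨e, i⟩, _⟩ | ⟨⟨e, i⟩, _⟩) (⟨⟨f, j⟩, _⟩ | ⟨⟨f, j⟩, _⟩) hne hrow <;>
    replace hrow := congrArg Subtype.val (mup.injective hrow) <;>
    simp only [Prod.mk.injEq, Sum.inl.injEq, Sum.inr.injEq, reduceCtorEq, false_and] at hrow
  · obtain ⟨-, rfl⟩ := hrow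
    exact hS_orth e f fun hef => hne (by subst hef; rfl)
  · obtain ⟨rfl, rfl⟩ := hrow
    exact absurd rfl hne

theorem Pmat_eq_sum_single [AddCommMonoid A] (r : E → V) (p : V → A)
    (hcomp : ∀ (q : SUp s x) (q' : SDn s x), mup q = mdn q' → rext r q.1.1 = rext r q'.1.1) :
    Pmat r s x p mup = ∑ q : SDn s x, single (mdn q) (mdn q) (p (rext r q.1.1)) := by
  refine Fintype.sum_equiv (mup.trans mdn.symm) _ _ fun q => ?_
  have hq : mdn ((mup.trans mdn.symm) q) = mup q := by simp
  rw [hq, hcomp q _ hq.symm]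

end Indices

theorem stmt12_general {V E A : Type*} [NonUnitalCStarAlgebra A]
    (r s : E → V) (p : V → A) (S : E → A)
    (hCK1 : ∀ e, star (S e) * S e = p (r e))
    (hS_orth : ∀ e f, e ≠ f → star (S e) * S f = 0)
    (x : V → ℤ)
    {h : ℕ} [Fintype (SUp s x)] [Fintype (SDn s x)]
    (mup : SUp s x ≃ Fin h) (mdn : SDn s x ≃ Fin h)
    (hcomp : ∀ (q : SUp s x) (q' : SDn s x), mup q = mdn q' → rext r q.1.1 = rext r q'.1.1)
    (hRCK : ∀ w, x w ≠ 0 → p w = ∑ᶠ e ∈ {e | s e = w}, S e * star (S e)) :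
    star (Vmat s x S mup mdn) * Vmat s x S mup mdn = Pmat r s x p mup := by
  classical
  rw [star_Vmat_mul_Vmat mup mdn r p S hCK1 hS_orth,
    sum_single_edgePart_eq_sum_single_vertexPart mdn _ p fun w hw => hRCK w hw.ne,
    Pmat_eq_sum_single mup mdn r p hcomp, Fintype.sum_subtype_sum_prod]
  rfl

theorem stmt12 {V E A : Type*} [Countable V] [Countable E] [NonUnitalCStarAlgebra A]
    (r s : E → V) (p : V → A) (S : E → A)
    (hp_star : ∀ v, star (p v) = p v)
    (hp_idem : ∀ v, p v * p v = p v)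
    (hp_orth : ∀ v w, v ≠ w → p v * p w = 0)
    (hCK1 : ∀ e, star (S e) * S e = p (r e))
    (hS_orth : ∀ e f, e ≠ f → star (S e) * S f = 0)
    (hCK3 : ∀ e, p (s e) * S e = S e)
    (x : V → ℤ) (hsupp : {v | x v ≠ 0}.Finite)
    (hemit : ∀ v, x v ≠ 0 → {e | s e = v}.Finite)
    (hker : ∀ v, ∑ᶠ e ∈ {e | r e = v}, x (s e) = x v)
    {h : ℕ} [Fintype (SUp s x)] [Fintype (SDn s x)]
    (mup : SUp s x ≃ Fin h) (mdn : SDn s x ≃ Fin h)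
    (hcomp : ∀ (q : SUp s x) (q' : SDn s x), mup q = mdn q' → rext r q.1.1 = rext r q'.1.1)
    (hRCK : ∀ w, x w ≠ 0 → p w = ∑ᶠ e ∈ {e | s e = w}, S e * star (S e)) :
    star (Vmat s x S mup mdn) * Vmat s x S mup mdn = Pmat r s x p mup :=
  stmt12_general r s p S hCK1 hS_orth x mup mdn hcomp hRCK
end

section
/- With notation as in the context, P − V*V = ∑_{w ∈ E⁰, 1≤i≤−x_w} (p_w − ∑_{e ∈ s⁻¹(w)} s_e s_e*)·E_{m↓(w,i),m↓(w,i)} in M_h(A). -/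
/-! The matrix `V` is a sum of matrix units `s_e·E_{m↑(s e,i), m↓(e,i)}` and
`s_e*·E_{m↑(e,i), m↓(s e,i)}`. Two distinct units share a row index only when they come from
edges `e ≠ f` with the same source and the same `i`, and then `s_e* s_f = 0`; so `V*V` is the sum
of the diagonal products, namely `p_{r(e)}` at `m↓(e,i)` and, after grouping the edges by their
source `w`, `∑_{s(e)=w} s_e s_e*` at `m↓(w,i)`. The compatibility of `m↑` with `m↓` turns `P`
into a diagonal matrix indexed through `m↓` as well, and the difference is read off entrywise. -/

open Matrix

theorem star_sum_mul_sum_of_pairwise {ι R : Type*} [Fintype ι] [NonUnitalNonAssocSemiring R]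
    [StarAddMonoid R] (t : ι → R) (ht : Pairwise fun i j => star (t i) * t j = 0) :
    star (∑ i, t i) * ∑ i, t i = ∑ i, star (t i) * t i := by
  rw [star_sum, Finset.sum_mul_sum]
  exact Finset.sum_congr rfl fun i _ =>
    Finset.sum_eq_single i (fun j _ hji => ht hji.symm) (by simp)

namespace Matrix

variable {ι n R : Type*} [Fintype n] [DecidableEq n]

theorem star_single_mul_single [NonUnitalSemiring R] [StarRing R] (i j k l : n) (a b : R) :
    star (single i j a) * single k l b = if i = k then single j l (star a * b) else 0 := by
  rw [star_eq_conjTranspose, conjTranspose_single]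
  split_ifs with hik
  · rw [hik, single_mul_single_same]
  · exact single_mul_single_of_ne _ _ _ _ hik _

theorem sum_single_equiv_eq_diagonal [Fintype ι] [AddCommMonoid R] (e : ι ≃ n) (d : ι → R) :
    ∑ q, single (e q) (e q) (d q) = diagonal fun k => d (e.symm k) := by
  rw [← sum_single_eq_diagonal]
  exact Fintype.sum_equiv e _ _ fun q => by simp

end Matrix

section GraphMatrices

variable {V E A : Type*} (r s : E → V) (x : V → ℤ) {h : ℕ}

theorem sum_SUp_fiber_eq_finsum [AddCommMonoid A] [DecidableEq E] [DecidableEq V]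
    [Fintype (SUp s x)] (hemit : ∀ v, x v ≠ 0 → {e | s e = v}.Finite) (c : E → A)
    (y : SDn s x) :
    ∑ q : SUp s x, Sum.elim (fun e => if y.1 = (Sum.inr (s e), q.1.2) then c e else 0)
        (fun _ => 0) q.1.1
      = Sum.elim (fun _ => 0) (fun w => ∑ᶠ e ∈ {e | s e = w}, c e) y.1.1 := by
  rcases y with ⟨⟨f | w, j⟩, hy⟩
  · refine Finset.sum_eq_zero fun q _ => ?_
    rcases q with ⟨⟨e | v, i⟩, hq⟩ <;> simp
  · have hj : 1 ≤ j ∧ j ≤ -x w := hy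
    have hfin := hemit w (by omega)
    rw [Sum.elim_inr, finsum_mem_eq_finite_toFinset_sum _ hfin]
    symm
    refine Finset.sum_bij_ne_zero (fun e he _ => ⟨(Sum.inl e, j), ?mem⟩)
      (fun _ _ _ => Finset.mem_univ _) ?inj ?surj ?val
    case mem =>
      have hse : s e = w := hfin.mem_toFinset.mp he
      show 1 ≤ j ∧ j ≤ -x (s e)
      rwa [hse]
    case inj => simp
    case surj =>
      rintro ⟨⟨e | v, i⟩, hq⟩ - hne
      · simp only [Sum.elim_inl, ne_eq, ite_eq_right_iff, Prod.mk.injEq, Sum.inr.injEq,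
          Classical.not_imp] at hne
        obtain ⟨⟨hse, rfl⟩, hce⟩ := hne
        exact ⟨e, hfin.mem_toFinset.mpr hse.symm, hce, rfl⟩
      · simp at hne
    case val =>
      intro e he _
      have hse : s e = w := hfin.mem_toFinset.mp he
      simp [hse]

namespace Vmat

variable (S : E → A) (mup : SUp s x ≃ Fin h) (mdn : SDn s x ≃ Fin h)

noncomputable def edgeTerm [Zero A] (q : SDn s x) : Matrix (Fin h) (Fin h) A :=
  match q with
  | ⟨(Sum.inl e, i), hq⟩ =>
      single (mup ⟨(Sum.inr (s e), i), hq⟩) (mdn ⟨(Sum.inl e, i), hq⟩) (S e)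
  | ⟨(Sum.inr _, _), _⟩ => 0

noncomputable def coedgeTerm [Zero A] [Star A] (q : SUp s x) : Matrix (Fin h) (Fin h) A :=
  match q with
  | ⟨(Sum.inl e, i), hq⟩ =>
      single (mup ⟨(Sum.inl e, i), hq⟩) (mdn ⟨(Sum.inr (s e), i), hq⟩) (star (S e))
  | ⟨(Sum.inr _, _), _⟩ => 0

noncomputable def term [Zero A] [Star A] : SDn s x ⊕ SUp s x → Matrix (Fin h) (Fin h) A :=
  Sum.elim (edgeTerm s x S mup mdn) (coedgeTerm s x S mup mdn)

theorem eq_sum_term [AddCommMonoid A] [Star A] [Fintype (SUp s x)] [Fintype (SDn s x)] :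
    Vmat s x S mup mdn = ∑ t, term s x S mup mdn t := by
  rw [Fintype.sum_sum_type]
  rfl

variable [NonUnitalSemiring A] [StarRing A]

theorem term_pairwise_orthogonal (hS_orth : ∀ e f, e ≠ f → star (S e) * S f = 0) :
    Pairwise fun t t' => star (term s x S mup mdn t) * term s x S mup mdn t' = 0 := by
  rintro (⟨⟨e | v, i⟩, hq⟩ | ⟨⟨e | v, i⟩, hq⟩) (⟨⟨f | w, j⟩, hq'⟩ | ⟨⟨f | w, j⟩, hq'⟩) hne <;>
    simp [term, edgeTerm, coedgeTerm, star_single_mul_single, Subtype.ext_iff]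
  · rintro - rfl
    rw [hS_orth e f fun hef => hne (by subst hef; rfl), single_zero]
  · rintro rfl rfl
    exact absurd rfl hne

theorem star_edgeTerm_mul_self (p : V → A) (hCK1 : ∀ e, star (S e) * S e = p (r e))
    (q : SDn s x) :
    star (edgeTerm s x S mup mdn q) * edgeTerm s x S mup mdn q
      = single (mdn q) (mdn q) (Sum.elim (fun e => p (r e)) (fun _ => 0) q.1.1) := by
  rcases q with ⟨⟨e | v, i⟩, hq⟩ <;> simp [edgeTerm, star_single_mul_single, hCK1]

theorem star_coedgeTerm_mul_self [DecidableEq E] [DecidableEq V] (q : SUp s x) :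
    star (coedgeTerm s x S mup mdn q) * coedgeTerm s x S mup mdn q
      = diagonal fun k => Sum.elim (fun e =>
          if (mdn.symm k).1 = (Sum.inr (s e), q.1.2) then S e * star (S e) else 0)
          (fun _ => 0) q.1.1 := by
  rcases q with ⟨⟨e | v, i⟩, hq⟩
  · rw [coedgeTerm, star_single_mul_single, if_pos rfl, star_star, ← diagonal_single]
    congr 1 with k
    simp only [Pi.single_apply, ← Equiv.symm_apply_eq, Subtype.ext_iff, Sum.elim_inl]
  · simp [coedgeTerm]

theorem sum_star_coedgeTerm_mul_self [Fintype (SUp s x)]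
    (hemit : ∀ v, x v ≠ 0 → {e | s e = v}.Finite) :
    ∑ q, star (coedgeTerm s x S mup mdn q) * coedgeTerm s x S mup mdn q
      = diagonal fun k => Sum.elim (fun _ => 0)
          (fun w => ∑ᶠ e ∈ {e | s e = w}, S e * star (S e)) (mdn.symm k).1.1 := by
  classical
  simp_rw [star_coedgeTerm_mul_self]
  ext k l
  rw [Matrix.sum_apply]
  by_cases hkl : k = l
  · subst hkl
    simp only [diagonal_apply_eq]
    exact sum_SUp_fiber_eq_finsum s x hemit (fun e => S e * star (S e)) (mdn.symm k)
  · simp [diagonal_apply_ne _ hkl]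

end Vmat

theorem star_Vmat_mul_Vmat_s16 [NonUnitalSemiring A] [StarRing A] (p : V → A) (S : E → A)
    [Fintype (SUp s x)] [Fintype (SDn s x)] (mup : SUp s x ≃ Fin h) (mdn : SDn s x ≃ Fin h)
    (hCK1 : ∀ e, star (S e) * S e = p (r e))
    (hS_orth : ∀ e f, e ≠ f → star (S e) * S f = 0)
    (hemit : ∀ v, x v ≠ 0 → {e | s e = v}.Finite) :
    star (Vmat s x S mup mdn) * Vmat s x S mup mdn
      = diagonal fun k => Sum.elim (fun e => p (r e))
          (fun w => ∑ᶠ e ∈ {e | s e = w}, S e * star (S e)) (mdn.symm k).1.1 := by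
  rw [Vmat.eq_sum_term,
    star_sum_mul_sum_of_pairwise _ (Vmat.term_pairwise_orthogonal s x S mup mdn hS_orth),
    Fintype.sum_sum_type]
  simp only [Vmat.term, Sum.elim_inl, Sum.elim_inr,
    Vmat.star_edgeTerm_mul_self r s x S mup mdn p hCK1, sum_single_equiv_eq_diagonal,
    Vmat.sum_star_coedgeTerm_mul_self s x S mup mdn hemit, diagonal_add]
  congr 1 with k
  cases (mdn.symm k).1.1 <;> simp

theorem Pmat_eq_diagonal [AddCommMonoid A] (p : V → A) [Fintype (SUp s x)] [Fintype (SDn s x)]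
    (mup : SUp s x ≃ Fin h) (mdn : SDn s x ≃ Fin h)
    (hcomp : ∀ (q : SUp s x) (q' : SDn s x), mup q = mdn q' → rext r q.1.1 = rext r q'.1.1) :
    Pmat r s x p mup = diagonal fun k => p (rext r (mdn.symm k).1.1) := by
  rw [Pmat, sum_single_equiv_eq_diagonal]
  congr 2 with k
  rw [hcomp (mup.symm k) (mdn.symm k) (by simp)]

end GraphMatrices

theorem stmt16_general {V E A : Type*} [NonUnitalCStarAlgebra A]
    (r s : E → V) (p : V → A) (S : E → A)
    (hCK1 : ∀ e, star (S e) * S e = p (r e))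
    (hS_orth : ∀ e f, e ≠ f → star (S e) * S f = 0)
    (x : V → ℤ)
    (hemit : ∀ v, x v ≠ 0 → {e | s e = v}.Finite)
    {h : ℕ} [Fintype (SUp s x)] [Fintype (SDn s x)]
    (mup : SUp s x ≃ Fin h) (mdn : SDn s x ≃ Fin h)
    (hcomp : ∀ (q : SUp s x) (q' : SDn s x), mup q = mdn q' → rext r q.1.1 = rext r q'.1.1) :
    Pmat r s x p mup - star (Vmat s x S mup mdn) * Vmat s x S mup mdn =
      ∑ q : SDn s x, Matrix.single (mdn q) (mdn q)
        (match q.1.1 with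
         | Sum.inl _ => (0 : A)
         | Sum.inr w => p w - ∑ᶠ e ∈ {e | s e = w}, S e * star (S e)) := by
  rw [star_Vmat_mul_Vmat_s16 r s x p S mup mdn hCK1 hS_orth hemit,
    Pmat_eq_diagonal r s x p mup mdn hcomp, sum_single_equiv_eq_diagonal, diagonal_sub]
  congr 1 with k
  rcases mdn.symm k with ⟨⟨e | w, i⟩, -⟩ <;> simp [rext]

theorem stmt16 {V E A : Type*} [Countable V] [Countable E] [NonUnitalCStarAlgebra A]
    (r s : E → V) (p : V → A) (S : E → A)
    (hp_star : ∀ v, star (p v) = p v)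
    (hp_idem : ∀ v, p v * p v = p v)
    (hp_orth : ∀ v w, v ≠ w → p v * p w = 0)
    (hCK1 : ∀ e, star (S e) * S e = p (r e))
    (hS_orth : ∀ e f, e ≠ f → star (S e) * S f = 0)
    (hCK3 : ∀ e, p (s e) * S e = S e)
    (x : V → ℤ) (hsupp : {v | x v ≠ 0}.Finite)
    (hemit : ∀ v, x v ≠ 0 → {e | s e = v}.Finite)
    (hker : ∀ v, ∑ᶠ e ∈ {e | r e = v}, x (s e) = x v)
    {h : ℕ} [Fintype (SUp s x)] [Fintype (SDn s x)]
    (mup : SUp s x ≃ Fin h) (mdn : SDn s x ≃ Fin h)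
    (hcomp : ∀ (q : SUp s x) (q' : SDn s x), mup q = mdn q' → rext r q.1.1 = rext r q'.1.1) :
    Pmat r s x p mup - star (Vmat s x S mup mdn) * Vmat s x S mup mdn =
      ∑ q : SDn s x, Matrix.single (mdn q) (mdn q)
        (match q.1.1 with
         | Sum.inl _ => (0 : A)
         | Sum.inr w => p w - ∑ᶠ e ∈ {e | s e = w}, S e * star (S e)) :=
  stmt16_general r s p S hCK1 hS_orth x hemit mup mdn hcomp
end
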